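/- arXiv:2008.08963 — 3 statements merged into one kernel-verified Lean document; each statement's English description precedes it below -/
import Mathlib

section
/- For finite random variables X, Y, Z with joint distribution P_{XYZ} such that there exists y* with P_{XY}(x, y*) = α·P_X(x) for all x (with α > 0), it holds that ‖P_{XYZ} - P_{XY}·P_{Z|X, Y=y*}‖₁ ≤ (2/α)·‖P_{XYZ} - P_{XY}·P_{Z|X}‖₁. -/
/-- Lemma 16 of BVY15. If `P_{XY}(x, y*) = α·P_X(x)` for all `x`, then
`‖P_{XYZ} - P_{XY}·P_{Z|X,y*}‖₁ ≤ (2/α)·‖P_{XYZ} - P_{XY}·P_{Z|X}‖₁`. -/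
theorem stmt3 {X Y Z : Type*} [Fintype X] [Fintype Y] [Fintype Z]
    (P : X × Y × Z → ℝ) (hP0 : ∀ a, 0 ≤ P a) (hP1 : ∑ a, P a = 1)
    (ystar : Y) (α : ℝ) (hα : 0 < α)
    (hanchor : ∀ x, (∑ z, P (x, ystar, z)) = α * ∑ y, ∑ z, P (x, y, z)) :
    (∑ a : X × Y × Z,
        |P a - (∑ z, P (a.1, a.2.1, z)) * (P (a.1, ystar, a.2.2) / ∑ z, P (a.1, ystar, z))|)
      ≤ (2 / α) *
        ∑ a : X × Y × Z,
          |P a - (∑ z, P (a.1, a.2.1, z)) *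
            ((∑ y, P (a.1, y, a.2.2)) / (∑ y, ∑ z, P (a.1, y, z)))| := by
  classical
  let S : X → Y → ℝ := fun x y => ∑ z, P (x, y, z)
  let T : X → ℝ := fun x => ∑ y, S x y
  let Q : X → Z → ℝ := fun x z => ∑ y, P (x, y, z)
  let A : X × Y × Z → ℝ := fun a =>
    |P a - S a.1 a.2.1 * (P (a.1, ystar, a.2.2) / S a.1 ystar)|
  let B : X × Y × Z → ℝ := fun a =>
    |P a - S a.1 a.2.1 * (Q a.1 a.2.2 / T a.1)|
  show ∑ a, A a ≤ (2 / α) * ∑ a, B a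
  have hS0 : ∀ x y, 0 ≤ S x y := fun x y => Finset.sum_nonneg fun z _ => hP0 _
  have hT0 : ∀ x, 0 ≤ T x := fun x => Finset.sum_nonneg fun y _ => hS0 x y
  have hST : ∀ x y, S x y ≤ T x := fun x y =>
    Finset.single_le_sum (fun y _ => hS0 x y) (Finset.mem_univ y)
  have hanch : ∀ x, S x ystar = α * T x := hanchor
  have hPz : ∀ x, T x = 0 → ∀ y z, P (x, y, z) = 0 := by
    intro x hx y z
    have h1 : S x y = 0 := le_antisymm (hx ▸ hST x y) (hS0 x y)
    have := (Finset.sum_eq_zero_iff_of_nonneg (fun z _ => hP0 (x, y, z))).1 h1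
    exact this z (Finset.mem_univ z)
  have hsumT : ∑ x, T x = 1 := by
    rw [← hP1, Fintype.sum_prod_type]
    exact Finset.sum_congr rfl fun x _ => by rw [Fintype.sum_prod_type]
  have hα1 : α ≤ 1 := by
    have h1 : ∑ x, S x ystar = α := by
      calc ∑ x, S x ystar = ∑ x, α * T x := Finset.sum_congr rfl fun x _ => hanch x
        _ = α * ∑ x, T x := by rw [Finset.mul_sum]
        _ = α := by rw [hsumT, mul_one]
    have h2 : ∑ x, S x ystar ≤ ∑ x, T x := Finset.sum_le_sum fun x _ => hST x ystar
    rw [h1, hsumT] at h2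
    exact h2
  have hB0 : ∀ a, 0 ≤ B a := fun a => abs_nonneg _
  have hBsum0 : 0 ≤ ∑ a, B a := Finset.sum_nonneg fun a _ => hB0 a
  -- the middle term
  let C : X × Y × Z → ℝ := fun a =>
    |S a.1 a.2.1 * (Q a.1 a.2.2 / T a.1) - S a.1 a.2.1 * (P (a.1, ystar, a.2.2) / S a.1 ystar)|
  have h1 : ∑ a, A a ≤ ∑ a, B a + ∑ a, C a := by
    rw [← Finset.sum_add_distrib]
    refine Finset.sum_le_sum fun a _ => ?_
    exact abs_sub_le _ _ _
  -- bound on ∑ C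
  have h2 : ∑ a, C a ≤ (1 / α) * ∑ a, B a := by
    let D : X → Z → ℝ := fun x z => |Q x z / T x - P (x, ystar, z) / S x ystar|
    have hC : ∀ a : X × Y × Z, C a = S a.1 a.2.1 * D a.1 a.2.2 := by
      intro a
      show |S a.1 a.2.1 * _ - S a.1 a.2.1 * _| = _
      rw [← mul_sub, abs_mul, abs_of_nonneg (hS0 a.1 a.2.1)]
    have key : ∀ x z, T x * D x z ≤
        (1 / α) * |P (x, ystar, z) - S x ystar * (Q x z / T x)| := by
      intro x z
      rcases eq_or_lt_of_le (hT0 x) with hT | hT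
      · have h0 : T x = 0 := hT.symm
        have hQ : S x ystar = 0 := by rw [hanch x, h0, mul_zero]
        rw [h0, zero_mul]
        positivity
      · have hTne : T x ≠ 0 := ne_of_gt hT
        have hαT : (0:ℝ) < α * T x := mul_pos hα hT
        have e1 : S x ystar * (Q x z / T x) = α * Q x z := by
          rw [hanch x]; field_simp
        have e2 : Q x z / T x - P (x, ystar, z) / S x ystar =
            (α * Q x z - P (x, ystar, z)) / (α * T x) := by
          rw [hanch x]; field_simp
        have hd : D x z = |α * Q x z - P (x, ystar, z)| / (α * T x) := by
          show |Q x z / T x - P (x, ystar, z) / S x ystar| = _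
          rw [e2, abs_div, abs_of_pos hαT]
        rw [hd, e1, abs_sub_comm]
        refine le_of_eq ?_
        field_simp
    calc ∑ a, C a = ∑ x, ∑ y, ∑ z, S x y * D x z := by
          rw [Fintype.sum_prod_type]
          exact Finset.sum_congr rfl fun x _ => by
            rw [Fintype.sum_prod_type]
            exact Finset.sum_congr rfl fun y _ =>
              Finset.sum_congr rfl fun z _ => hC (x, y, z)
      _ = ∑ x, ∑ z, T x * D x z := by
          refine Finset.sum_congr rfl fun x _ => ?_
          rw [Finset.sum_comm]
          refine Finset.sum_congr rfl fun z _ => ?_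
          rw [← Finset.sum_mul]
      _ ≤ ∑ x, ∑ z, (1 / α) * |P (x, ystar, z) - S x ystar * (Q x z / T x)| := by
          exact Finset.sum_le_sum fun x _ => Finset.sum_le_sum fun z _ => key x z
      _ = (1 / α) * ∑ x, ∑ z, B (x, ystar, z) := by
          rw [Finset.mul_sum]
          exact Finset.sum_congr rfl fun x _ => by rw [Finset.mul_sum]
      _ ≤ (1 / α) * ∑ a, B a := by
          refine mul_le_mul_of_nonneg_left ?_ (by positivity)
          rw [Fintype.sum_prod_type]
          refine Finset.sum_le_sum fun x _ => ?_
          rw [Fintype.sum_prod_type]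
          exact Finset.single_le_sum
            (f := fun y => ∑ z, B (x, y, z))
            (fun y _ => Finset.sum_nonneg fun z _ => hB0 _) (Finset.mem_univ ystar)
  have hcoef : 1 + 1 / α ≤ 2 / α := by
    rw [show (1:ℝ) + 1 / α = (α + 1) / α by field_simp, div_le_div_iff₀ hα hα]
    nlinarith
  calc ∑ a, A a ≤ ∑ a, B a + (1 / α) * ∑ a, B a := by linarith
    _ = (1 + 1 / α) * ∑ a, B a := by ring
    _ ≤ (2 / α) * ∑ a, B a := mul_le_mul_of_nonneg_right hcoef hBsum0
end

section
/- Suppose P_{XY} and P_{X'Y'Z'} are distributions on finite sets with ‖P_{XY} - P_{X'Y'}‖₁ ≤ ε, and P_{XY}(x, y*) = α·P_X(x) for all x, where ε = ‖P_{X'Y'Z'} - P_{XY}·P_{Z'|X'}‖₁. Then ‖P_{X'Z'|Y'=y*} - P_{X'Z'}‖₁ ≤ (11/α)·‖P_{X'Y'Z'} - P_{XY}·P_{Z'|X'}‖₁. -/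
/-!
Write `u = Q(·, y*, ·)` and `v = Q_{XZ}`, so that `Q_{XZ|y*} = u / ‖u‖₁`. The anchoring of `P`
forces `u ≈ α v`: replacing `Q` by `P_{XY}·Q_{Z|X}` costs `ε`, and in `P_{XY}·Q_{Z|X}` the slice
`y = y*` is `α P_X · Q_{Z|X}`, which is `α v` up to `α ‖P_X - Q_X‖₁ ≤ α ε`. Hence, as `α ≤ 1`,
`‖u - α v‖₁ ≤ 2ε`. Finally `u/S - v = (u - α v)/α + u (1/S - 1/α)` with `S = ∑ u` and
`|S - α| ≤ ‖u - α v‖₁`, so renormalising costs at most `2 · 2ε/α ≤ 11ε/α`.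
-/

open Finset

/-- This includes the case `∑ u = 0`, where `u / 0 = 0`. -/
theorem sum_abs_div_sum_sub_le {ι : Type*} [Fintype ι] {u v : ι → ℝ} {α δ : ℝ} (hα : 0 < α)
    (hu : ∀ i, 0 ≤ u i) (hv : ∑ i, v i = 1) (h : ∑ i, |u i - α * v i| ≤ δ) :
    ∑ i, |u i / ∑ j, u j - v i| ≤ 2 * δ / α := by
  generalize hSdef : ∑ j, u j = S
  have hSα : |S - α| ≤ δ :=
    calc |S - α| = |∑ i, (u i - α * v i)| := by
          rw [sum_sub_distrib, ← mul_sum, hv, mul_one, hSdef]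
      _ ≤ ∑ i, |u i - α * v i| := abs_sum_le_sum_abs _ _
      _ ≤ δ := h
  have hrescale : ∑ i, |u i / S - u i / α| ≤ |S - α| / α := by
    have hsum : ∑ i, |u i / S - u i / α| = S * |S⁻¹ - α⁻¹| := by
      simp_rw [div_eq_mul_inv (u _), ← mul_sub, abs_mul, abs_of_nonneg (hu _), ← sum_mul, hSdef]
    rw [hsum]
    rcases (hSdef ▸ sum_nonneg fun i _ => hu i : 0 ≤ S).eq_or_lt with hS | hS
    · rw [← hS, zero_mul]
      positivity
    · rw [inv_sub_inv hS.ne' hα.ne', abs_div, abs_mul, abs_of_pos hS, abs_of_pos hα,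
        abs_sub_comm]
      exact le_of_eq (by field_simp)
  calc ∑ i, |u i / S - v i| ≤ ∑ i, (|u i - α * v i| / α + |u i / S - u i / α|) := by
        gcongr with i
        calc |u i / S - v i| = |(u i - α * v i) / α + (u i / S - u i / α)| := by
              congr 1; field_simp; ring
          _ ≤ |u i - α * v i| / α + |u i / S - u i / α| :=
              (abs_add_le _ _).trans_eq (by rw [abs_div, abs_of_pos hα])
    _ = (∑ i, |u i - α * v i|) / α + ∑ i, |u i / S - u i / α| := by
        rw [sum_add_distrib, sum_div]
    _ ≤ δ / α + δ / α := by gcongr; exact hrescale.trans (by gcongr)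
    _ = 2 * δ / α := by ring

theorem sum_abs_mul_div_sum_sub_mul_le {ι : Type*} [Fintype ι] {r : ι → ℝ} (hr : ∀ i, 0 ≤ r i)
    (p a : ℝ) : ∑ i, |p * (r i / ∑ j, r j) - a * r i| ≤ |p - a * ∑ j, r j| := by
  generalize hA : ∑ j, r j = A
  rcases eq_or_ne A 0 with h0 | h0
  · have hr0 : ∀ i, r i = 0 := fun i =>
      (sum_eq_zero_iff_of_nonneg fun i _ => hr i).mp (hA.trans h0) i (mem_univ i)
    simp [hr0]
  · have hterm : ∀ i, |p * (r i / A) - a * r i| = |p - a * A| * (r i / A) := fun i => by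
      have : p * (r i / A) - a * r i = (p - a * A) * (r i / A) := by field_simp
      rw [this, abs_mul,
        abs_of_nonneg (div_nonneg (hr i) (hA ▸ sum_nonneg fun j _ => hr j : 0 ≤ A))]
    rw [sum_congr rfl fun i _ => hterm i, ← mul_sum, ← sum_div, hA, div_self h0, mul_one]

theorem sum_abs_anchor_sub_le {Y Z : Type*} [Fintype Y] [Fintype Z] (p : Y → ℝ)
    (q : Y → Z → ℝ) (hq : ∀ y z, 0 ≤ q y z) {ystar : Y} {α : ℝ} (hα : 0 ≤ α)
    (hanchor : p ystar = α * ∑ y, p y) :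
    ∑ z, |q ystar z - α * ∑ y, q y z| ≤
      ∑ y, ∑ z, |q y z - p y * ((∑ y', q y' z) / ∑ y', ∑ z', q y' z')| +
        α * ∑ y, |p y - ∑ z, q y z| := by
  set r : Z → ℝ := fun z => ∑ y, q y z
  have hr : ∑ y', ∑ z', q y' z' = ∑ z, r z := sum_comm
  have hslice : ∑ z, |q ystar z - p ystar * (r z / ∑ z', r z')| ≤
      ∑ y, ∑ z, |q y z - p y * (r z / ∑ z', r z')| :=
    single_le_sum (f := fun y => ∑ z, |q y z - p y * (r z / ∑ z', r z')|)
      (fun y _ => sum_nonneg fun z _ => abs_nonneg _) (mem_univ ystar)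
  have hmarginal : |p ystar - α * ∑ z, r z| ≤ α * ∑ y, |p y - ∑ z, q y z| := by
    rw [hanchor, ← hr, ← mul_sub, ← sum_sub_distrib, abs_mul, abs_of_nonneg hα]
    exact mul_le_mul_of_nonneg_left (abs_sum_le_sum_abs _ _) hα
  rw [hr]
  calc ∑ z, |q ystar z - α * r z|
      ≤ ∑ z, (|q ystar z - p ystar * (r z / ∑ z', r z')| +
          |p ystar * (r z / ∑ z', r z') - α * r z|) :=
        sum_le_sum fun z _ => abs_sub_le _ _ _
    _ ≤ ∑ y, ∑ z, |q y z - p y * (r z / ∑ z', r z')| + |p ystar - α * ∑ z, r z| := by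
        rw [sum_add_distrib]
        exact add_le_add hslice
          (sum_abs_mul_div_sum_sub_mul_le (fun z => sum_nonneg fun y _ => hq y z) _ _)
    _ ≤ _ := by gcongr

theorem le_one_of_anchor {X Y : Type*} [Fintype X] [Fintype Y] {P : X × Y → ℝ}
    (hP0 : ∀ b, 0 ≤ P b) (hP1 : ∑ b, P b = 1) {ystar : Y} {α : ℝ}
    (hanchor : ∀ x, P (x, ystar) = α * ∑ y, P (x, y)) : α ≤ 1 := by
  rw [Fintype.sum_prod_type] at hP1
  calc α = ∑ x, P (x, ystar) := by simp_rw [hanchor, ← mul_sum, hP1, mul_one]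
    _ ≤ ∑ x, ∑ y, P (x, y) :=
      sum_le_sum fun x _ => single_le_sum (fun y _ => hP0 (x, y)) (mem_univ ystar)
    _ = 1 := hP1

theorem stmt4_general {X Y Z : Type*} [Fintype X] [Fintype Y] [Fintype Z]
    (P : X × Y → ℝ) (Q : X × Y × Z → ℝ) (ystar : Y) (α ε : ℝ)
    (hP0 : ∀ b, 0 ≤ P b) (hP1 : ∑ b, P b = 1)
    (hQ0 : ∀ a, 0 ≤ Q a) (hQ1 : ∑ a, Q a = 1)
    (hα : 0 < α)
    (hanchor : ∀ x, P (x, ystar) = α * ∑ y, P (x, y))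
    (hε : ε = ∑ a : X × Y × Z,
        |Q a - P (a.1, a.2.1) *
          ((∑ y, Q (a.1, y, a.2.2)) / (∑ y, ∑ z, Q (a.1, y, z)))|)
    (hclose : ∑ b : X × Y, |P b - ∑ z, Q (b.1, b.2, z)| ≤ ε) :
    ∑ c : X × Z,
        |Q (c.1, ystar, c.2) / (∑ x, ∑ z, Q (x, ystar, z)) - ∑ y, Q (c.1, y, c.2)|
      ≤ (11 / α) * ε := by
  have hε0 : 0 ≤ ε := (sum_nonneg fun _ _ => abs_nonneg _).trans hclose
  have hQXZ : ∑ c : X × Z, ∑ y, Q (c.1, y, c.2) = 1 := by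
    rw [← hQ1]
    simp only [Fintype.sum_prod_type]
    exact sum_congr rfl fun x _ => sum_comm
  have hdev : ∑ c : X × Z, |Q (c.1, ystar, c.2) - α * ∑ y, Q (c.1, y, c.2)| ≤ 2 * ε := by
    have hε' : ε = ∑ x, ∑ y, ∑ z,
        |Q (x, y, z) - P (x, y) * ((∑ y', Q (x, y', z)) / ∑ y', ∑ z', Q (x, y', z'))| := by
      simp only [hε, Fintype.sum_prod_type]
    rw [Fintype.sum_prod_type] at hclose
    calc ∑ c : X × Z, |Q (c.1, ystar, c.2) - α * ∑ y, Q (c.1, y, c.2)|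
        ≤ ∑ x, (∑ y, ∑ z,
            |Q (x, y, z) - P (x, y) * ((∑ y', Q (x, y', z)) / ∑ y', ∑ z', Q (x, y', z'))| +
          α * ∑ y, |P (x, y) - ∑ z, Q (x, y, z)|) := by
          rw [Fintype.sum_prod_type]
          exact sum_le_sum fun x _ => sum_abs_anchor_sub_le (fun y => P (x, y))
            (fun y z => Q (x, y, z)) (fun y z => hQ0 _) hα.le (hanchor x)
      _ = ε + α * ∑ x, ∑ y, |P (x, y) - ∑ z, Q (x, y, z)| := by
          rw [sum_add_distrib, ← mul_sum, hε']
      _ ≤ ε + 1 * ε := by gcongr; exact le_one_of_anchor hP0 hP1 hanchor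
      _ = 2 * ε := by ring
  rw [← Fintype.sum_prod_type' (fun x z => Q (x, ystar, z))]
  calc _ ≤ 2 * (2 * ε) / α := sum_abs_div_sum_sub_le hα (fun c => hQ0 _) hQXZ hdev
    _ ≤ 11 * ε / α := div_le_div_of_nonneg_right (by linarith) hα.le
    _ = (11 / α) * ε := div_mul_eq_mul_div 11 α ε |>.symm

/-- Corollary of the anchoring lemma. If `‖P_{XY} - Q_{XY}‖₁ ≤ ε` where
`ε = ‖Q_{XYZ} - P_{XY}·Q_{Z|X}‖₁`, and `P` is anchored at `y*` with probability `α`, then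
`‖Q_{XZ|y*} - Q_{XZ}‖₁ ≤ (11/α)·ε`. -/
theorem stmt4 {X Y Z : Type*} [Fintype X] [Fintype Y] [Fintype Z]
    (P : X × Y → ℝ) (Q : X × Y × Z → ℝ) (ystar : Y) (α ε : ℝ)
    (hP0 : ∀ b, 0 ≤ P b) (hP1 : ∑ b, P b = 1)
    (hQ0 : ∀ a, 0 ≤ Q a) (hQ1 : ∑ a, Q a = 1)
    (hα : 0 < α)
    (hanchor : ∀ x, P (x, ystar) = α * ∑ y, P (x, y))
    (hε : ε = ∑ a : X × Y × Z,
        |Q a - P (a.1, a.2.1) *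
          ((∑ y, Q (a.1, y, a.2.2)) / (∑ y, ∑ z, Q (a.1, y, z)))|)
    (hεpos : 0 < ε)
    (hclose : ∑ b : X × Y, |P b - ∑ z, Q (b.1, b.2, z)| ≤ ε)
    (hystar : 0 < ∑ x, ∑ z, Q (x, ystar, z)) :
    ∑ c : X × Z,
        |Q (c.1, ystar, c.2) / (∑ x, ∑ z, Q (x, ystar, z)) - ∑ y, Q (c.1, y, c.2)|
      ≤ (11 / α) * ε :=
  stmt4_general P Q ystar α ε hP0 hP1 hQ0 hQ1 hα hanchor hε hclose
end

section
/- Let p be a distribution on X × Y, ζ ∈ (0,1), and y* ∉ Y. Define random variables (D, G, X, Y) as follows: D is uniform on {0,1}; conditioned on D=0, G is distributed as p_X and then (X,Y) = (G, y*) with probability ζ and (X,Y) = (G, y) with probability (1-ζ)·p(y|G); conditioned on D=1, G = y* with probability 1-(1-ζ)^{2/3} and G = y with probability (1-ζ)^{2/3}·p_Y(y), and then if G = y*, X ∼ p_X and Y = y*, while if G = y ∈ Y, X ∼ p(·|y) and Y = y* with probability 1-(1-ζ)^{1/3}, Y = y otherwise. Then the marginal distribution of (X,Y) equals q, where q(x,y)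 = (1-ζ)·p(x,y) for y ∈ Y and q(x,y*) = ζ·p_X(x). -/
/-- The correlation-breaking construction: the joint law of
`(D, G, X, Y)` described in the paper (with `D : Bool`, `G : X ⊕ (Y ∪ {y*})`,
`y* := none`) has `(X, Y)`-marginal equal to the anchored distribution `q`, where
`q(x,y) = (1-ζ)p(x,y)` for `y ∈ Y` and `q(x,y*) = ζ·p_X(x)`. Conditional
distributions are taken with the junk convention `·/0 = 0`. -/
theorem stmt11 {X Y : Type*} [Fintype X] [Fintype Y] [DecidableEq X] [DecidableEq Y]
    (ζ : ℝ) (hζ0 : 0 < ζ) (hζ1 : ζ < 1)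
    (p : X × Y → ℝ) (hp0 : ∀ a, 0 ≤ p a) (hp1 : ∑ a, p a = 1)
    (pX : X → ℝ) (hpX : ∀ x, pX x = ∑ y, p (x, y))
    (pY : Y → ℝ) (hpY : ∀ y, pY y = ∑ x, p (x, y))
    (J : Bool × (X ⊕ Option Y) × X × Option Y → ℝ)
    (hJ : ∀ d g x yo, J (d, g, x, yo) =
      match d, g with
      | false, Sum.inl gx =>
          (1 / 2) * pX gx *
            (if x = gx then
              (match yo with
                | none => ζ
                | some y => (1 - ζ) * (p (gx, y) / pX gx))
             else 0)
      | false, Sum.inr _ => 0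
      | true, Sum.inl _ => 0
      | true, Sum.inr none =>
          (1 / 2) * (1 - (1 - ζ) ^ ((2 : ℝ) / 3)) * pX x *
            (if yo = none then 1 else 0)
      | true, Sum.inr (some gy) =>
          (1 / 2) * ((1 - ζ) ^ ((2 : ℝ) / 3) * pY gy) * (p (x, gy) / pY gy) *
            (match yo with
              | none => 1 - (1 - ζ) ^ ((1 : ℝ) / 3)
              | some y => if y = gy then (1 - ζ) ^ ((1 : ℝ) / 3) else 0)) :
    ∀ (x : X) (yo : Option Y),
      (∑ d, ∑ g : X ⊕ Option Y, J (d, g, x, yo)) =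
        match yo with
        | none => ζ * pX x
        | some y => (1 - ζ) * p (x, y) := by
  have h1ζ : (0:ℝ) < 1 - ζ := by linarith
  have hrpow : (1 - ζ) ^ ((2 : ℝ) / 3) * (1 - ζ) ^ ((1 : ℝ) / 3) = 1 - ζ := by
    rw [← Real.rpow_add h1ζ]; norm_num
  have hx0 : ∀ x y, pX x = 0 → p (x, y) = 0 := fun x y h => by
    rw [hpX] at h
    exact (Finset.sum_eq_zero_iff_of_nonneg (fun y _ => hp0 (x, y))).mp h y (Finset.mem_univ y)
  have hy0 : ∀ x y, pY y = 0 → p (x, y) = 0 := fun x y h => by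
    rw [hpY] at h
    exact (Finset.sum_eq_zero_iff_of_nonneg (fun x _ => hp0 (x, y))).mp h x (Finset.mem_univ x)
  have hxd : ∀ x y, pX x * (p (x, y) / pX x) = p (x, y) := fun x y => by
    by_cases h : pX x = 0
    · simp [h, hx0 x y h]
    · field_simp
  have hyd : ∀ x y, pY y * (p (x, y) / pY y) = p (x, y) := fun x y => by
    by_cases h : pY y = 0
    · simp [h, hy0 x y h]
    · field_simp
  intro x yo
  cases yo with
  | some y =>
    simp only [hJ, Fintype.sum_bool, Fintype.sum_sum_type, Fintype.sum_option,
      mul_ite, mul_zero, Finset.sum_ite_eq, Finset.mem_univ, if_true,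
      Finset.sum_const_zero, add_zero, zero_add, reduceCtorEq, if_false]
    have e1 : 1 / 2 * ((1 - ζ) ^ ((2:ℝ) / 3) * pY y) * (p (x, y) / pY y) * (1 - ζ) ^ ((1:ℝ) / 3)
        = 1 / 2 * ((1 - ζ) ^ ((2:ℝ) / 3) * (1 - ζ) ^ ((1:ℝ) / 3)) *
          (pY y * (p (x, y) / pY y)) := by ring
    have e2 : 1 / 2 * pX x * ((1 - ζ) * (p (x, y) / pX x))
        = 1 / 2 * (1 - ζ) * (pX x * (p (x, y) / pX x)) := by ring
    rw [e1, e2, hyd, hxd, hrpow]; ring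
  | none =>
    simp only [hJ, Fintype.sum_bool, Fintype.sum_sum_type, Fintype.sum_option,
      mul_ite, mul_zero, mul_one, Finset.sum_ite_eq, Finset.mem_univ, if_true,
      Finset.sum_const_zero, add_zero, zero_add]
    have e3 : ∀ gy : Y, 1 / 2 * ((1 - ζ) ^ ((2:ℝ) / 3) * pY gy) * (p (x, gy) / pY gy) *
        (1 - (1 - ζ) ^ ((1:ℝ) / 3))
        = 1 / 2 * (1 - ζ) ^ ((2:ℝ) / 3) * (1 - (1 - ζ) ^ ((1:ℝ) / 3)) * p (x, gy) := fun gy => by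
      rw [show 1 / 2 * ((1 - ζ) ^ ((2:ℝ) / 3) * pY gy) * (p (x, gy) / pY gy) *
          (1 - (1 - ζ) ^ ((1:ℝ) / 3))
          = 1 / 2 * (1 - ζ) ^ ((2:ℝ) / 3) * (1 - (1 - ζ) ^ ((1:ℝ) / 3)) *
            (pY gy * (p (x, gy) / pY gy)) from by ring, hyd]
    simp only [e3]
    rw [← Finset.mul_sum, ← hpX]
    linear_combination (-(pX x) / 2) * hrpow
end
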